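/- Let A = {0,1} be the binary alphabet and M = {1,2,3,4}. For every subgroup H ≤ S(M) that is closed under the action on O, there exist a positive integer n and a code C ⊆ A^n with exactly 4 codewords (with some encoding bijection λ : M → C) such that Iso(C) = Mon(C) = H. -/

import Mathlib

/-- Partitions of `Fin m` are represented as finsets of finsets. -/
abbrev Ptn (m : ℕ) := Finset (Finset (Fin m))

/-- `α` is a partition of `Fin m`: all classes are nonempty and every element
belongs to exactly one class. -/
def IsPartition {m : ℕ} (α : Ptn m) : Prop :=
  (∀ c ∈ α, c.Nonempty) ∧ ∀ i : Fin m, ∃! c, c ∈ α ∧ i ∈ c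

/-- `P`: the set of partitions of `M = Fin m` into at most `q` nonempty classes. -/
def Pset (m q : ℕ) : Set (Ptn m) :=
  {α | IsPartition α ∧ α.card ≤ q}

/-- `P₂`: the partitions of the form `{{i,j}, M ∖ {i,j}}` for 2-element subsets `{i,j}`. -/
def P2set (m : ℕ) : Set (Ptn m) :=
  {α | ∃ p : Finset (Fin m), p.card = 2 ∧ α = {p, pᶜ}}

/-- `O` as a set: the 2-element subsets of `M = Fin m`. -/
def Oset (m : ℕ) : Set (Finset (Fin m)) := {p | p.card = 2}

/-- `O` as a type: the 2-element subsets of `M = Fin m`. -/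
abbrev OO (m : ℕ) := {p : Finset (Fin m) // p.card = 2}

/-- `P` as a type. -/
abbrev PP (m q : ℕ) := {α : Ptn m // α ∈ Pset m q}

noncomputable instance (m q : ℕ) : Fintype (PP m q) := Fintype.ofFinite _

/-- The canonical action of `S(M)` on partitions: `g({c₁,…,cₜ}) = {g(c₁),…,g(cₜ)}`. -/
def permPart {m : ℕ} (g : Equiv.Perm (Fin m)) (α : Ptn m) : Ptn m :=
  α.image fun c => c.image g

/-- The canonical action of `S(M)` on subsets of `M`. -/
def permPair {m : ℕ} (g : Equiv.Perm (Fin m)) (p : Finset (Fin m)) : Finset (Fin m) :=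
  p.image g

/-- `H` is closed under the action `act` on `S` if every `g` that maps each
`H`-orbit of `S` onto itself belongs to `H`. -/
def ClosedUnder {m : ℕ} {X : Type*} (act : Equiv.Perm (Fin m) → X → X) (S : Set X)
    (H : Set (Equiv.Perm (Fin m))) : Prop :=
  ∀ g : Equiv.Perm (Fin m), (∀ x ∈ S, ∃ h ∈ H, act g x = act h x) → g ∈ H

section Code

variable {m n : ℕ} {A : Type*} [Fintype A] [DecidableEq A]

/-- A map `h : Aⁿ → Aⁿ` is monomial if `h(a) = (σ₁(a_{π(1)}), …, σₙ(a_{π(n)}))`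
for a permutation `π ∈ Sₙ` and permutations `σ₁,…,σₙ` of `A`. -/
def IsMonomial (h : (Fin n → A) → (Fin n → A)) : Prop :=
  ∃ (π : Equiv.Perm (Fin n)) (σ : Fin n → Equiv.Perm A),
    ∀ (a : Fin n → A) (k : Fin n), h a k = σ k (a (π k))

/-- `Iso(C)`: the permutations `g` of the messages such that `λ ∘ g ∘ λ⁻¹` is a
Hamming isometry of the code encoded by `lam`. -/
def IsoSet (lam : Fin m → Fin n → A) : Set (Equiv.Perm (Fin m)) :=
  {g | ∀ i j : Fin m, hammingDist (lam (g i)) (lam (g j)) = hammingDist (lam i) (lam j)}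

/-- `Mon(C)`: the elements of `Iso(C)` such that `λ ∘ g ∘ λ⁻¹` extends to a
monomial map of `Aⁿ`. -/
def MonSet (lam : Fin m → Fin n → A) : Set (Equiv.Perm (Fin m)) :=
  {g | g ∈ IsoSet lam ∧
    ∃ h : (Fin n → A) → (Fin n → A), IsMonomial h ∧ ∀ i : Fin m, h (lam i) = lam (g i)}

/-- `Ψ(x) = {x⁻¹(a) : a ∈ A} ∖ {∅}`, the partition of `M` induced by `x : M → A`. -/
def PsiF (x : Fin m → A) : Ptn m :=
  (Finset.univ.image fun a : A => Finset.univ.filter fun i : Fin m => x i = a).erase ∅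

/-- The multiplicity function `η_λ(α) = |{k : Ψ(λ_k) = α}|`. -/
def eta (lam : Fin m → Fin n → A) (α : Ptn m) : ℚ :=
  (((Finset.univ : Finset (Fin n)).filter fun k => PsiF (fun i => lam i k) = α).card : ℚ)

/-- The multiplicity function, restricted to `P`. -/
def etaP (q : ℕ) (lam : Fin m → Fin n → A) : PP m q → ℚ := fun α => eta lam α.1

end Code

open Classical in
/-- `Δ_α({i,j}) = 0` if `i` and `j` lie in the same class of `α`, and `1` otherwise. -/
noncomputable def Delta {m q : ℕ} (α : PP m q) (p : OO m) : ℚ :=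
  if ∃ c ∈ α.1, p.1 ⊆ c then 0 else 1

/-- The linear map `W : F(P,ℚ) → F(O,ℚ)`, `W(η)(p) = Σ_{α∈P} η(α)Δ_α(p)`. -/
noncomputable def WLin (m q : ℕ) : (PP m q → ℚ) →ₗ[ℚ] (OO m → ℚ) where
  toFun η := fun p => ∑ α : PP m q, η α * Delta α p
  map_add' x y := by
    funext p
    simp [add_mul, Finset.sum_add_distrib]
  map_smul' c x := by
    funext p
    simp [Finset.mul_sum, mul_assoc]

/-- The matrix `B`: `B_{p,t} = 1` if `|p ∩ t| = 1`, and `0` otherwise. -/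
def Bmat (m : ℕ) : Matrix (OO m) (OO m) ℚ :=
  Matrix.of fun p t => if (p.1 ∩ t.1).card = 1 then 1 else 0

/-- The matrix `D`: `2(m−2)(m−4)·D_{p,t}` equals `−m²+8m−14` if `p = t`,
`m−4` if `|p∩t| = 1`, and `−2` if `p ∩ t = ∅`. -/
def Dmat (m : ℕ) : Matrix (OO m) (OO m) ℚ :=
  Matrix.of fun p t =>
    (if p = t then -(m : ℚ) ^ 2 + 8 * m - 14
      else if (p.1 ∩ t.1).card = 1 then (m : ℚ) - 4 else -2) /
      (2 * ((m : ℚ) - 2) * ((m : ℚ) - 4))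

/-- `ξ_x = Σ_{r∈O} x(r) Σ_{p∈O} D_{r,p} · id_{{p, M∖p}}`. -/
noncomputable def xi (m q : ℕ) (x : OO m → ℚ) : PP m q → ℚ := fun α =>
  ∑ r : OO m, x r * ∑ p : OO m, Dmat m r p * (if α.1 = ({p.1, p.1ᶜ} : Ptn m) then 1 else 0)

/-- `ζ_α = id_α − ξ_{Δ_α}`. -/
noncomputable def zeta (m q : ℕ) (α : PP m q) : PP m q → ℚ :=
  (fun β => if β = α then 1 else 0) - xi m q fun p => Delta α p

/-- `V₀`: the functions in `F(P,ℚ)` vanishing on `P ∖ P₂`. -/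
def V0 (m q : ℕ) : Set (PP m q → ℚ) :=
  {η | ∀ α : PP m q, (α : Ptn m) ∉ P2set m → η α = 0}

open Classical in
/-- `id_{P₂} = Σ_{α∈P₂} id_α`. -/
noncomputable def idP2 (m q : ℕ) : PP m q → ℚ := fun α =>
  if (α : Ptn m) ∈ P2set m then 1 else 0

theorem permPart_mem_Pset {m q : ℕ} (g : Equiv.Perm (Fin m)) {α : Ptn m}
    (hα : α ∈ Pset m q) : permPart g α ∈ Pset m q := by
  obtain ⟨⟨hne, huniq⟩, hcard⟩ := hα
  refine ⟨⟨?_, ?_⟩, le_trans Finset.card_image_le hcard⟩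
  · intro c hc
    simp only [permPart, Finset.mem_image] at hc
    obtain ⟨d, hd, rfl⟩ := hc
    exact (hne d hd).image g
  · intro i
    obtain ⟨c, ⟨hc, hic⟩, hun⟩ := huniq (g.symm i)
    refine ⟨c.image g, ⟨?_, ?_⟩, ?_⟩
    · simp only [permPart, Finset.mem_image]
      exact ⟨c, hc, rfl⟩
    · exact Finset.mem_image.2 ⟨g.symm i, hic, g.apply_symm_apply i⟩
    · rintro d ⟨hd, hid⟩
      simp only [permPart, Finset.mem_image] at hd
      obtain ⟨e, he, rfl⟩ := hd
      rw [Finset.mem_image] at hid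
      obtain ⟨j, hj, hji⟩ := hid
      have hjs : j = g.symm i := by
        apply g.injective
        rw [hji, g.apply_symm_apply]
      subst hjs
      rw [hun e ⟨he, hj⟩]

/-- The action of `S(M)` on `P`. -/
def permPP {m q : ℕ} (g : Equiv.Perm (Fin m)) (α : PP m q) : PP m q :=
  ⟨permPart g α.1, permPart_mem_Pset g α.2⟩

/-- The action of `S(M)` on `F(P,ℚ)`: `g(η)(α) = η(g⁻¹(α))`. -/
def permF {m q : ℕ} (g : Equiv.Perm (Fin m)) (η : PP m q → ℚ) : PP m q → ℚ :=
  fun α => η (permPP g⁻¹ α)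

/-- `Stab(η) = {g ∈ S(M) : g(η) = η}`. -/
def StabSet {m q : ℕ} (η : PP m q → ℚ) : Set (Equiv.Perm (Fin m)) :=
  {g | permF g η = η}

/-- `Stab_W(η) = {g ∈ S(M) : W(g(η)) = W(η)}`. -/
def StabWSet (m q : ℕ) (η : PP m q → ℚ) : Set (Equiv.Perm (Fin m)) :=
  {g | WLin m q (permF g η) = WLin m q η}

/-! A column of a binary code on `M` is the indicator of a subset `s ⊆ M`, a *cut*; it separates
`i` and `j` iff exactly one of them lies in `s`, and a permutation of `M` that permutes the columns
is realised by a monomial map. Give every `r ⊆ M` a weight `w r` and, per unit of weight, the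
columns `r` and `{t} \ r` for `t ∈ M`. Exactly two of these separate `i ≠ j` unless `{i, j} ⊆ r`,
so `d(λ i, λ j) = 2 ∑_{r ⊉ {i,j}} w r`, which is `2 ∑ w - 2 w {i, j}` when `w` vanishes above
size two. Let `w r` be a positive label of the `H`-orbit of `r`. Then `H` permutes the columns, so
`H ⊆ Mon(C) ⊆ Iso(C)`; an isometry preserves `w` on pairs, hence maps every pair into its
`H`-orbit, and closedness puts it in `H`. -/

open Finset Pointwise

section Monomial

variable {m n : ℕ} {A : Type*} [DecidableEq A]

theorem hammingDist_comp_perm {ι : Type*} [Fintype ι] (x y : ι → A) (π : Equiv.Perm ι) :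
    hammingDist (x ∘ π) (y ∘ π) = hammingDist x y :=
  card_equiv π (by simp)

theorem mem_monSet_of_perm_coords [Fintype A] {lam : Fin m → Fin n → A}
    {g : Equiv.Perm (Fin m)} (π : Equiv.Perm (Fin n)) (hπ : ∀ i, lam (g i) = lam i ∘ π) :
    g ∈ MonSet lam :=
  ⟨fun i j => by rw [hπ, hπ, hammingDist_comp_perm], fun a => a ∘ π,
    ⟨π, fun _ => 1, fun _ _ => rfl⟩, fun i => (hπ i).symm⟩

end Monomial

section CutCode

variable {m : ℕ} {J : Type*} [Fintype J] (S : J → Finset (Fin m))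

noncomputable def cutCode : Fin m → Fin (Fintype.card J) → Fin 2 :=
  fun i k => if i ∈ S ((Fintype.equivFin J).symm k) then 1 else 0

theorem hammingDist_cutCode (i j : Fin m) :
    hammingDist (cutCode S i) (cutCode S j) = #{z | ¬(i ∈ S z ↔ j ∈ S z)} := by
  rw [hammingDist]
  refine card_equiv (Fintype.equivFin J).symm fun k => ?_
  rw [mem_filter, mem_filter]
  simp only [mem_univ, true_and, cutCode]
  by_cases hi : i ∈ S ((Fintype.equivFin J).symm k) <;>
    by_cases hj : j ∈ S ((Fintype.equivFin J).symm k) <;> simp [hi, hj]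

theorem cutCode_injective (hS : ∀ i j, i ≠ j → ∃ z, i ∈ S z ∧ j ∉ S z) :
    Function.Injective (cutCode S) := by
  intro i j hij
  by_contra hne
  obtain ⟨z, hi, hj⟩ := hS i j hne
  have := congrFun hij (Fintype.equivFin J z)
  simp [cutCode, hi, hj] at this

theorem mem_monSet_cutCode {g : Equiv.Perm (Fin m)} (τ : Equiv.Perm J)
    (hτ : ∀ z i, i ∈ S (τ z) ↔ g i ∈ S z) : g ∈ MonSet (cutCode S) := by
  refine mem_monSet_of_perm_coords
    (((Fintype.equivFin J).symm.trans τ).trans (Fintype.equivFin J)) fun i => funext fun k => ?_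
  simp [cutCode, hτ]

end CutCode

section WeightedCut

variable {m : ℕ}

def blockCut (r : Finset (Fin m)) : Option (Fin m) → Finset (Fin m)
  | none => r
  | some t => {t} \ r

theorem card_separating_blockCut (r : Finset (Fin m)) {i j : Fin m} (hij : i ≠ j) :
    #{o | ¬(i ∈ blockCut r o ↔ j ∈ blockCut r o)} = if {i, j} ⊆ r then 0 else 2 := by
  rw [card_filter, Fintype.sum_option]
  simp only [blockCut, mem_sdiff, mem_singleton]
  by_cases hi : i ∈ r <;> by_cases hj : j ∈ r <;> simp [hi, hj, insert_subset_iff]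
  have hsplit : ∀ x, (if i = x ↔ j = x then 0 else 1) =
      (if i = x then 1 else 0) + (if j = x then 1 else 0) := by
    intro x
    by_cases hix : i = x <;> by_cases hjx : j = x <;> simp_all
  simp [hsplit, sum_add_distrib]

theorem mem_blockCut_inv_smul {g : Equiv.Perm (Fin m)} {r : Finset (Fin m)}
    {o : Option (Fin m)} {i : Fin m} :
    i ∈ blockCut (g⁻¹ • r) (o.map ⇑g⁻¹) ↔ g i ∈ blockCut r o := by
  cases o <;> simp [blockCut, mem_inv_smul_finset_iff, Equiv.eq_symm_apply]

variable (w : Finset (Fin m) → ℕ)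

abbrev BlockIndex := Σ r : Finset (Fin m), Fin (w r) × Option (Fin m)

def weightedCut (z : BlockIndex w) : Finset (Fin m) := blockCut z.1 z.2.2

variable {w}

theorem card_separating_weightedCut {i j : Fin m} (hij : i ≠ j) :
    #{z | ¬(i ∈ weightedCut w z ↔ j ∈ weightedCut w z)} =
      ∑ r, w r * if {i, j} ⊆ r then 0 else 2 := by
  rw [card_filter, Fintype.sum_sigma]
  refine sum_congr rfl fun r _ => ?_
  rw [Fintype.sum_prod_type]
  change ∑ _x : Fin (w r), ∑ o, (if ¬(i ∈ blockCut r o ↔ j ∈ blockCut r o) then 1 else 0) = _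
  rw [sum_const, card_univ, Fintype.card_fin, smul_eq_mul, ← card_filter,
    card_separating_blockCut r hij]

theorem hammingDist_cutCode_weightedCut_add (hw : ∀ r, 2 < #r → w r = 0) {i j : Fin m}
    (hij : i ≠ j) :
    hammingDist (cutCode (weightedCut w) i) (cutCode (weightedCut w) j) + 2 * w {i, j} =
      2 * ∑ r, w r := by
  have hpair : ∑ r, (if ({i, j} : Finset (Fin m)) ⊆ r then w r else 0) = w {i, j} := by
    rw [sum_eq_single {i, j} (fun r _ hr => ?_) (fun h => absurd (mem_univ _) h),
      if_pos subset_rfl]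
    split_ifs with hsub
    · exact hw r ((card_pair hij).symm.trans_lt (card_lt_card (hsub.ssubset_of_ne (Ne.symm hr))))
    · rfl
  rw [hammingDist_cutCode, card_separating_weightedCut hij, ← hpair, mul_sum, ← sum_add_distrib,
    mul_sum]
  refine sum_congr rfl fun r _ => ?_
  split_ifs <;> ring

theorem weight_smul_eq_of_mem_isoSet (hw : ∀ r, 2 < #r → w r = 0) {g : Equiv.Perm (Fin m)}
    (hg : g ∈ IsoSet (cutCode (weightedCut w))) {P : Finset (Fin m)} (hP : #P = 2) :
    w (g • P) = w P := by
  obtain ⟨i, j, hij, rfl⟩ := card_eq_two.1 hP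
  have hdist := hammingDist_cutCode_weightedCut_add hw (g.injective.ne hij)
  rw [hg i j, ← hammingDist_cutCode_weightedCut_add hw hij] at hdist
  rw [smul_finset_insert, smul_finset_singleton]
  simpa using hdist

theorem cutCode_weightedCut_injective (hw : 0 < w ∅) :
    Function.Injective (cutCode (weightedCut w)) :=
  cutCode_injective _ fun i j hij =>
    ⟨⟨∅, ⟨0, hw⟩, some i⟩, by simp [weightedCut, blockCut, Ne.symm hij]⟩

theorem mem_monSet_cutCode_weightedCut {g : Equiv.Perm (Fin m)} (hg : ∀ r, w (g • r) = w r) :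
    g ∈ MonSet (cutCode (weightedCut w)) := by
  have hinv : ∀ r, w r = w (g⁻¹ • r) := fun r => by rw [← hg (g⁻¹ • r), smul_inv_smul]
  refine mem_monSet_cutCode _ (Equiv.sigmaCongr (MulAction.toPerm g⁻¹) fun r =>
    (finCongr (hinv r)).prodCongr (Equiv.optionCongr g⁻¹)) ?_
  rintro ⟨r, x, o⟩ i
  exact mem_blockCut_inv_smul

end WeightedCut

section OrbitIndex

variable (G : Type*) {X : Type*} [Group G] [MulAction G X] [Finite X]

noncomputable def orbitIndex (x : X) : ℕ :=
  Finite.equivFin (MulAction.orbitRel.Quotient G X) ⟦x⟧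

variable {G}

theorem orbitIndex_smul (g : G) (x : X) : orbitIndex G (g • x) = orbitIndex G x := by
  rw [orbitIndex, orbitIndex, MulAction.orbitRel.Quotient.quotient_smul_eq]

theorem exists_smul_eq_of_orbitIndex_eq {x y : X} (h : orbitIndex G x = orbitIndex G y) :
    ∃ g : G, g • y = x :=
  Quotient.exact ((Finite.equivFin _).injective (Fin.ext h))

end OrbitIndex

section OrbitWeight

variable {m : ℕ} (H : Subgroup (Equiv.Perm (Fin m)))

/-- The weight is positive on `∅` so that every point cut `{t}` is a column, which makes the
code injective. -/
noncomputable def orbitWeight (r : Finset (Fin m)) : ℕ :=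
  if #r ≤ 2 then orbitIndex H r + 1 else 0

variable {H}

theorem orbitWeight_smul {g : Equiv.Perm (Fin m)} (hg : g ∈ H) (r : Finset (Fin m)) :
    orbitWeight H (g • r) = orbitWeight H r := by
  rw [orbitWeight, orbitWeight, card_smul_finset, show g • r = (⟨g, hg⟩ : H) • r from rfl,
    orbitIndex_smul]

theorem orbitWeight_eq_zero {r : Finset (Fin m)} (hr : 2 < #r) : orbitWeight H r = 0 :=
  if_neg hr.not_ge

theorem orbitWeight_empty_pos : 0 < orbitWeight H ∅ := by
  simp [orbitWeight]

theorem exists_mem_smul_eq_of_orbitWeight_eq {g : Equiv.Perm (Fin m)} {P : Finset (Fin m)}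
    (hP : #P = 2) (h : orbitWeight H (g • P) = orbitWeight H P) : ∃ h ∈ H, g • P = h • P := by
  rw [orbitWeight, orbitWeight, card_smul_finset, if_pos hP.le, if_pos hP.le] at h
  obtain ⟨h, hh⟩ := exists_smul_eq_of_orbitIndex_eq (Nat.succ_injective h)
  exact ⟨h, h.2, hh.symm⟩

end OrbitWeight

/-- for every subgroup `H ≤ S₄` closed under the action on `O`, there is a
binary code with exactly 4 codewords such that `Iso(C) = Mon(C) = H`. -/
theorem binary_four_codewords_exists (H : Subgroup (Equiv.Perm (Fin 4)))
    (hH : ClosedUnder permPair (Oset 4) (H : Set (Equiv.Perm (Fin 4)))) :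
    ∃ n : ℕ, 0 < n ∧ ∃ lam : Fin 4 → Fin n → Fin 2, Function.Injective lam ∧
      IsoSet lam = (H : Set (Equiv.Perm (Fin 4))) ∧
      MonSet lam = (H : Set (Equiv.Perm (Fin 4))) := by
  have hmon : ∀ g ∈ H, g ∈ MonSet (cutCode (weightedCut (orbitWeight H))) :=
    fun g hg => mem_monSet_cutCode_weightedCut (orbitWeight_smul hg)
  have hiso : ∀ g ∈ IsoSet (cutCode (weightedCut (orbitWeight H))), g ∈ H := fun g hg =>
    hH g fun P hP => exists_mem_smul_eq_of_orbitWeight_eq hP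
      (weight_smul_eq_of_mem_isoSet (fun _ => orbitWeight_eq_zero) hg hP)
  have hpos : 0 < orbitWeight H ∅ := orbitWeight_empty_pos
  refine ⟨_, Fintype.card_pos_iff.2 ⟨⟨∅, ⟨0, hpos⟩, none⟩⟩, _,
    cutCode_weightedCut_injective hpos, ?_, ?_⟩
  · exact Set.Subset.antisymm hiso fun g hg => (hmon g hg).1
  · exact Set.Subset.antisymm (fun g hg => hiso g hg.1) hmon
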